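/- arXiv:2201.08206 — 5 statements merged into one kernel-verified Lean document; each statement's English description precedes it below -/
import Mathlib

section
/- For any measurable selection S with μ(S) < ∞, the choice of S satisfies cho(S) = ∫_S (μ(S) − 2·po(x)) dμ(x). -/
/-!
Split `S × S` into the pairs on which `R` is symmetric (whose measure is the choice of `S`), the
pairs `(x, y)` with `y R* x`, and their mirror images. The swap of coordinates preserves `μ × μ`,
so the last two parts have the same measure; since `S` is a selection, the slice of the middle part
at `x ∈ S` is the whole set `{y | y R* x}`, so by Tonelli its measure is `∫_S po dμ`. Hence
`cho(S) + 2 ∫_S po dμ = μ(S)²`.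
-/

open MeasureTheory
open scoped ENNReal

section

variable {X : Type*} [MeasurableSpace X]

lemma measure_diff_union_add_inter_add_inter {μ : Measure X} (T : Set X) {A B : Set X}
    (hA : MeasurableSet A) (hB : MeasurableSet B) (hAB : Disjoint A B) :
    μ (T \ (A ∪ B)) + μ (T ∩ A) + μ (T ∩ B) = μ T := by
  have hdiffB : T \ A ∩ B = T ∩ B :=
    Set.ext fun _ => ⟨fun h => ⟨h.1.1, h.2⟩, fun h => ⟨⟨h.1, Set.disjoint_right.1 hAB h.2⟩, h.2⟩⟩
  rw [← measure_inter_add_sdiff T hA, ← measure_inter_add_sdiff (T \ A) hB, hdiffB,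
    Set.sdiff_sdiff]
  ring

lemma setIntegral_const_sub_mul_toReal {μ : Measure X} {S : Set X} {f : X → ℝ≥0∞}
    (hf : AEMeasurable f (μ.restrict S))
    (hf_fin : ∫⁻ x in S, f x ∂μ ≠ ⊤) (hS : μ S ≠ ⊤) (c a : ℝ) :
    ∫ x in S, (c - a * (f x).toReal) ∂μ = μ.real S * c - a * (∫⁻ x in S, f x ∂μ).toReal := by
  rw [integral_sub (integrableOn_const (C := c) hS)
      ((integrable_toReal_of_lintegral_ne_top hf hf_fin).const_mul a),
    setIntegral_const, integral_const_mul, integral_toReal hf (ae_lt_top' hf hf_fin), smul_eq_mul]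

variable {μ : Measure X} [SFinite μ]

lemma measure_prod_self_inter_swap_preimage (S : Set X) (D : Set (X × X)) :
    μ.prod μ (S ×ˢ S ∩ Prod.swap ⁻¹' D) = μ.prod μ (S ×ˢ S ∩ D) := by
  have hswap : MeasurePreserving MeasurableEquiv.prodComm (μ.prod μ) (μ.prod μ) :=
    Measure.measurePreserving_swap
  rw [← hswap.measure_preimage_equiv (S ×ˢ S ∩ D)]
  change _ = μ.prod μ (Prod.swap ⁻¹' _)
  rw [Set.preimage_inter, Set.preimage_swap_prod]

lemma measure_prod_self_inter_eq_setLIntegral {S : Set X} {D : Set (X × X)}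
    (hD : MeasurableSet D) (hclosed : ∀ x ∈ S, ∀ y, (x, y) ∈ D → y ∈ S) :
    μ.prod μ (S ×ˢ S ∩ D) = ∫⁻ x in S, μ (Prod.mk x ⁻¹' D) ∂μ := by
  have hslice : S ×ˢ S ∩ D = D ∩ S ×ˢ Set.univ := by
    ext ⟨x, y⟩
    simp only [Set.mem_inter_iff, Set.mem_prod, Set.mem_univ, and_true]
    exact ⟨fun h => ⟨h.2, h.1.1⟩, fun h => ⟨⟨h.2, hclosed x h.2 y h.1⟩, h.1⟩⟩
  rw [hslice, ← Measure.restrict_apply hD, ← Measure.restrict_prod_eq_prod_univ,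
    Measure.prod_apply hD]

end

namespace ChoiceIntegral

variable {X : Type*}

/-- The pairs `(x, y)` with `y R* x`; the slice at `x` is `{y | y R* x}`, of measure `po(x)`. -/
def strictPredPairs (R : X → X → Prop) : Set (X × X) :=
  {p | R p.2 p.1 ∧ ¬ R p.1 p.2}

lemma disjoint_strictPredPairs_swap (R : X → X → Prop) :
    Disjoint (strictPredPairs R) (Prod.swap ⁻¹' strictPredPairs R) :=
  Set.disjoint_left.2 fun _ hp hp' => hp.2 hp'.1

lemma choiceSet_eq_diff (R : X → X → Prop) (S : Set X) :
    {p : X × X | p.1 ∈ S ∧ p.2 ∈ S ∧ (R p.1 p.2 ↔ R p.2 p.1)}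
      = S ×ˢ S \ (strictPredPairs R ∪ Prod.swap ⁻¹' strictPredPairs R) := by
  ext p
  simp only [strictPredPairs, Set.mem_ofPred_eq, Set.mem_sdiff, Set.mem_prod, Set.mem_union,
    Set.mem_preimage, Prod.fst_swap, Prod.snd_swap]
  tauto

variable [MeasurableSpace X]

lemma measurableSet_strictPredPairs {R : X → X → Prop}
    (hR : MeasurableSet {p : X × X | R p.1 p.2}) : MeasurableSet (strictPredPairs R) :=
  (hR.preimage measurable_swap).inter hR.compl

variable {μ : Measure X} [SFinite μ]

lemma choice_add_two_mul_setLIntegral {R : X → X → Prop}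
    (hR : MeasurableSet {p : X × X | R p.1 p.2}) {S : Set X}
    (hsel : ∀ x ∈ S, ∀ y, (R y x ∧ ¬ R x y) → y ∈ S) :
    μ.prod μ {p | p.1 ∈ S ∧ p.2 ∈ S ∧ (R p.1 p.2 ↔ R p.2 p.1)}
      + 2 * ∫⁻ x in S, μ {y | R y x ∧ ¬ R x y} ∂μ = μ S * μ S := by
  have hD := measurableSet_strictPredPairs hR
  have hslices : μ.prod μ (S ×ˢ S ∩ strictPredPairs R) = ∫⁻ x in S, μ {y | R y x ∧ ¬ R x y} ∂μ :=
    measure_prod_self_inter_eq_setLIntegral hD hsel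
  rw [choiceSet_eq_diff, ← Measure.prod_prod, ← measure_diff_union_add_inter_add_inter (S ×ˢ S) hD
    (hD.preimage measurable_swap) (disjoint_strictPredPairs_swap R),
    measure_prod_self_inter_swap_preimage, hslices]
  ring

end ChoiceIntegral

open ChoiceIntegral

theorem choice_integral_formula_general
    {X : Type*} [MeasurableSpace X] (μ : Measure X) [SigmaFinite μ]
    (R : X → X → Prop) (hR : MeasurableSet {p : X × X | R p.1 p.2})
    (S : Set X) (hfin : μ S < ⊤)
    (hsel : ∀ x ∈ S, ∀ y, (R y x ∧ ¬ R x y) → y ∈ S) :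
    ((μ.prod μ) {p : X × X | p.1 ∈ S ∧ p.2 ∈ S ∧ (R p.1 p.2 ↔ R p.2 p.1)}).toReal
      = ∫ x in S, ((μ S).toReal - 2 * (μ {y | R y x ∧ ¬ R x y}).toReal) ∂μ := by
  have hkey := choice_add_two_mul_setLIntegral (μ := μ) hR hsel
  have hsq_fin : μ S * μ S ≠ ⊤ := ENNReal.mul_ne_top hfin.ne hfin.ne
  have hcho_fin : μ.prod μ {p | p.1 ∈ S ∧ p.2 ∈ S ∧ (R p.1 p.2 ↔ R p.2 p.1)} ≠ ⊤ :=
    ne_top_of_le_ne_top hsq_fin (hkey ▸ le_self_add)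
  have hpo_fin : ∫⁻ x in S, μ {y | R y x ∧ ¬ R x y} ∂μ ≠ ⊤ :=
    ne_top_of_le_ne_top hsq_fin (hkey ▸ le_add_self.trans' (le_mul_of_one_le_left' one_le_two))
  have hpo_meas : Measurable fun x => μ {y | R y x ∧ ¬ R x y} :=
    measurable_measure_prodMk_left (measurableSet_strictPredPairs hR)
  have hkey_real := congrArg ENNReal.toReal hkey
  rw [ENNReal.toReal_add hcho_fin (ENNReal.mul_ne_top ENNReal.ofNat_ne_top hpo_fin),
    ENNReal.toReal_mul, ENNReal.toReal_mul, ENNReal.toReal_ofNat] at hkey_real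
  rw [setIntegral_const_sub_mul_toReal hpo_meas.aemeasurable hpo_fin hfin.ne, measureReal_def]
  linarith

/-- Integral formula for the choice of a measurable selection `S` of finite measure:
`cho(S) = ∫_S (μ(S) − 2·po(x)) dμ(x)`. -/
theorem choice_integral_formula
    {X : Type*} [MeasurableSpace X] (μ : Measure X) [SigmaFinite μ]
    (R : X → X → Prop) (hR : MeasurableSet {p : X × X | R p.1 p.2})
    (S : Set X) (hS : MeasurableSet S) (hfin : μ S < ⊤)
    (hsel : ∀ x ∈ S, ∀ y, (R y x ∧ ¬ R x y) → y ∈ S) :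
    ((μ.prod μ) {p : X × X | p.1 ∈ S ∧ p.2 ∈ S ∧ (R p.1 p.2 ↔ R p.2 p.1)}).toReal
      = ∫ x in S, ((μ S).toReal - 2 * (μ {y | R y x ∧ ¬ R x y}).toReal) ∂μ :=
  choice_integral_formula_general μ R hR S hfin hsel
end

section
/- Suppose T_k is a selection with μ(T_k) < ∞. Then T_k offers maximum choice for m = μ(T_k): for every selection S with μ(S) ≤ μ(T_k), cho(S) ≤ cho(T_k). Moreover, any selection A with μ(A) ≤ μ(T_k) and cho(A) = cho(T_k) satisfies μ(A \ T_k) = 0. -/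
open MeasureTheory
open scoped ENNReal

/-- `k`-Pareto optimality of `x`. -/
noncomputable def po {X : Type*} [MeasurableSpace X] (μ : Measure X)
    (R : X → X → Prop) (x : X) : ℝ≥0∞ :=
  μ {y | R y x ∧ ¬ R x y}

/-- The set `T_k` of at least `k`-Pareto optimal elements. -/
def Tset {X : Type*} [MeasurableSpace X] (μ : Measure X)
    (R : X → X → Prop) (k : ℝ≥0∞) : Set X :=
  {x | po μ R x ≤ k}

/-- The choice offered by a set `A`:
`cho(A) = (μ×μ)({(x,y) ∈ A² : (x R y) = (y R x)})`. -/
noncomputable def cho {X : Type*} [MeasurableSpace X] (μ : Measure X)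
    (R : X → X → Prop) (A : Set X) : ℝ≥0∞ :=
  (μ.prod μ) {p : X × X | p.1 ∈ A ∧ p.2 ∈ A ∧ (R p.1 p.2 ↔ R p.2 p.1)}

/-- A selection: `x ∈ S` and `y R* x` imply `y ∈ S`. -/
def IsSelection {X : Type*} (R : X → X → Prop) (S : Set X) : Prop :=
  ∀ x ∈ S, ∀ y, (R y x ∧ ¬ R x y) → y ∈ S

/-!
For a selection `U`, a pair in `U²` is either counted by `cho U` or strictly ordered in one of
the two directions, and the pairs `(x, y)` with `y R* x` have measure `∫_U po`; so
`cho U + 2 ∫_U po = μ(U)²`.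

Compare a selection `S` with `T = T_k` through `a = μ(T \ S)`, `b = μ(S \ T)`,
`c = μ(T ∩ S)`, where `b ≤ a`. On `T \ S` we have `po ≤ k`, and also
`2 ∫_{T \ S} po ≤ 2ca + a²`, because a strict pair inside `T \ S` is counted in only one of
its two orders. Whichever of these two bounds is the better one gives
`(c + b)² + 2 ∫_{T \ S} po ≤ (c + a)² + 2kb`, which by the identity above reads
`cho S + 2 ∫_{S \ T} po ≤ cho T + 2kb`. Since `po > k` off `T`, the integral exceeds `kb` as
soon as `b > 0`, and then `cho S < cho T`.
-/

open scoped NNReal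

section MaximumChoice

variable {X : Type*} [MeasurableSpace X] {R : X → X → Prop}

def strictPairs (R : X → X → Prop) (A U : Set X) : Set (X × X) :=
  A ×ˢ U ∩ {p | R p.2 p.1 ∧ ¬ R p.1 p.2}

theorem measurableSet_strictPairs (hR : MeasurableSet {p : X × X | R p.1 p.2})
    {A U : Set X} (hA : MeasurableSet A) (hU : MeasurableSet U) :
    MeasurableSet (strictPairs R A U) :=
  (hA.prod hU).inter ((hR.preimage measurable_swap).inter hR.compl)

theorem cho_add_two_mul_prod_strictPairs (μ : Measure X) [SFinite μ]
    (hR : MeasurableSet {p : X × X | R p.1 p.2}) {A : Set X} (hA : MeasurableSet A) :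
    cho μ R A + 2 * (μ.prod μ) (strictPairs R A A) = μ A ^ 2 := by
  have hsp := measurableSet_strictPairs hR hA hA
  have hswap :
      (μ.prod μ) (Prod.swap ⁻¹' strictPairs R A A) = (μ.prod μ) (strictPairs R A A) :=
    Measure.measurePreserving_swap.measure_preimage hsp.nullMeasurableSet
  have hdecomp : A ×ˢ A = {p : X × X | p.1 ∈ A ∧ p.2 ∈ A ∧ (R p.1 p.2 ↔ R p.2 p.1)} ∪
      (strictPairs R A A ∪ Prod.swap ⁻¹' strictPairs R A A) := by
    ext ⟨x, y⟩; simp only [strictPairs, Set.mem_prod, Set.mem_union, Set.mem_inter_iff,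
      Set.mem_preimage, Set.mem_ofPred_eq, Prod.swap_prod_mk]; tauto
  rw [sq, ← Measure.prod_prod, hdecomp, measure_union, measure_union, hswap, two_mul]
  · rfl
  · exact Set.disjoint_left.2 fun p h₁ h₂ => h₁.2.2 h₂.2.1
  · exact hsp.preimage measurable_swap
  · refine Set.disjoint_left.2 ?_
    rintro ⟨x, y⟩ ⟨-, -, hiff⟩ (⟨-, hyx, hxy⟩ | ⟨-, hxy, hyx⟩)
    · exact hxy (hiff.2 hyx)
    · exact hyx (hiff.1 hxy)
  · exact hsp.union (hsp.preimage measurable_swap)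

theorem setLIntegral_po_eq_prod_strictPairs (μ : Measure X) [SFinite μ]
    (hR : MeasurableSet {p : X × X | R p.1 p.2}) {A U : Set X} (hA : MeasurableSet A)
    (hU : MeasurableSet U) (hUsel : IsSelection R U) (hAU : A ⊆ U) :
    ∫⁻ x in A, po μ R x ∂μ = (μ.prod μ) (strictPairs R A U) := by
  rw [Measure.prod_apply (measurableSet_strictPairs hR hA hU), ← lintegral_indicator hA]
  refine lintegral_congr fun x => ?_
  by_cases hx : x ∈ A
  · rw [Set.indicator_of_mem hx, po]
    congr 1
    ext y
    simp only [strictPairs, Set.mem_preimage, Set.mem_inter_iff, Set.mem_prod,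
      Set.mem_ofPred_eq]
    exact ⟨fun hy => ⟨⟨hx, hUsel x (hAU hx) y hy⟩, hy⟩, fun hy => hy.2⟩
  · simp [strictPairs, hx]

theorem cho_add_two_mul_setLIntegral_po (μ : Measure X) [SFinite μ]
    (hR : MeasurableSet {p : X × X | R p.1 p.2}) {U : Set X} (hU : MeasurableSet U)
    (hUsel : IsSelection R U) :
    cho μ R U + 2 * ∫⁻ x in U, po μ R x ∂μ = μ U ^ 2 := by
  rw [setLIntegral_po_eq_prod_strictPairs μ hR hU hU hUsel subset_rfl,
    cho_add_two_mul_prod_strictPairs μ hR hU]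

theorem po_le_measure_of_isSelection {μ : Measure X} {U : Set X} (hUsel : IsSelection R U)
    {x : X} (hx : x ∈ U) : po μ R x ≤ μ U :=
  measure_mono fun y hy => hUsel x hx y hy

theorem setLIntegral_po_ne_top {μ : Measure X} {U : Set X} (hUsel : IsSelection R U)
    (hU : μ U ≠ ∞) :
    ∫⁻ x in U, po μ R x ∂μ ≠ ∞ :=
  ne_top_of_le_ne_top (ENNReal.mul_ne_top hU hU)
    ((setLIntegral_mono measurable_const fun _ hx => po_le_measure_of_isSelection hUsel hx).trans_eq
      (setLIntegral_const U (μ U)))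

theorem two_mul_setLIntegral_po_le (μ : Measure X) [SFinite μ]
    (hR : MeasurableSet {p : X × X | R p.1 p.2}) {A U : Set X} (hA : MeasurableSet A)
    (hU : MeasurableSet U) (hUsel : IsSelection R U) (hAU : A ⊆ U) :
    2 * ∫⁻ x in A, po μ R x ∂μ ≤ 2 * (μ (U \ A) * μ A) + μ A ^ 2 := by
  have hsplit : strictPairs R A U ⊆ A ×ˢ (U \ A) ∪ strictPairs R A A := by
    rintro ⟨x, y⟩ ⟨⟨hx, hy⟩, hyx⟩
    by_cases hyA : y ∈ A
    · exact Or.inr ⟨⟨hx, hyA⟩, hyx⟩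
    · exact Or.inl ⟨hx, hy, hyA⟩
  rw [setLIntegral_po_eq_prod_strictPairs μ hR hA hU hUsel hAU]
  calc 2 * (μ.prod μ) (strictPairs R A U)
      ≤ 2 * ((μ.prod μ) (A ×ˢ (U \ A)) + (μ.prod μ) (strictPairs R A A)) := by
        gcongr; exact (measure_mono hsplit).trans (measure_union_le _ _)
    _ = 2 * (μ (U \ A) * μ A) + 2 * (μ.prod μ) (strictPairs R A A) := by
        rw [Measure.prod_prod, mul_add, mul_comm (μ A)]
    _ ≤ 2 * (μ (U \ A) * μ A) + μ A ^ 2 := by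
        gcongr; exact le_add_self.trans_eq (cho_add_two_mul_prod_strictPairs μ hR hA)

theorem sq_add_two_mul_le {a b c k I : ℝ≥0∞} (ha : a ≠ ∞) (hc : c ≠ ∞) (hba : b ≤ a)
    (hIk : I ≤ k * a) (hI : 2 * I ≤ 2 * (c * a) + a ^ 2) :
    (c + b) ^ 2 + 2 * I ≤ (c + a) ^ 2 + 2 * (k * b) := by
  rcases eq_or_ne k ∞ with rfl | hk
  · rcases eq_or_ne b 0 with rfl | hb
    · calc (c + 0) ^ 2 + 2 * I ≤ c ^ 2 + (2 * (c * a) + a ^ 2) := by rw [add_zero]; gcongr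
        _ = (c + a) ^ 2 + 2 * (∞ * 0) := by rw [mul_zero]; ring
    · simp [ENNReal.top_mul hb]
  lift a to ℝ≥0 using ha
  lift c to ℝ≥0 using hc
  lift k to ℝ≥0 using hk
  lift b to ℝ≥0 using ne_top_of_le_ne_top ENNReal.coe_ne_top hba
  lift I to ℝ≥0 using ne_top_of_le_ne_top ENNReal.coe_ne_top hIk
  norm_cast at hba hIk hI ⊢
  rw [← NNReal.coe_le_coe] at hba hIk hI ⊢
  push_cast at hIk hI ⊢
  rcases le_total (2 * (k : ℝ)) (a + b + 2 * c) with h | h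
  · nlinarith [mul_nonneg (sub_nonneg.2 hba) (sub_nonneg.2 h)]
  · nlinarith [mul_nonneg b.2 (sub_nonneg.2 h), mul_nonneg a.2 b.2]

theorem cho_add_two_mul_setLIntegral_po_inter_add_sdiff (μ : Measure X) [SFinite μ]
    (hR : MeasurableSet {p : X × X | R p.1 p.2}) {U V : Set X} (hU : MeasurableSet U)
    (hV : MeasurableSet V) (hUsel : IsSelection R U) :
    cho μ R U + 2 * (∫⁻ x in U ∩ V, po μ R x ∂μ + ∫⁻ x in U \ V, po μ R x ∂μ) =
      (μ (U ∩ V) + μ (U \ V)) ^ 2 := by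
  rw [lintegral_inter_add_sdiff _ _ hV, measure_inter_add_sdiff _ hV]
  exact cho_add_two_mul_setLIntegral_po μ hR hU hUsel

theorem measurableSet_Tset {μ : Measure X} (hpo : Measurable (po μ R)) (k : ℝ≥0∞) :
    MeasurableSet (Tset μ R k) :=
  hpo measurableSet_Iic

theorem cho_add_two_mul_setLIntegral_po_sdiff_Tset_le {μ : Measure X} [SFinite μ]
    (hR : MeasurableSet {p : X × X | R p.1 p.2}) (hpo : Measurable (po μ R)) {k : ℝ≥0∞}
    (hTsel : IsSelection R (Tset μ R k)) (hTfin : μ (Tset μ R k) ≠ ∞) {S : Set X}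
    (hS : MeasurableSet S) (hSsel : IsSelection R S) (hST : μ S ≤ μ (Tset μ R k)) :
    cho μ R S + 2 * ∫⁻ x in S \ Tset μ R k, po μ R x ∂μ ≤
      cho μ R (Tset μ R k) + 2 * (k * μ (S \ Tset μ R k)) := by
  set T := Tset μ R k
  have hT : MeasurableSet T := measurableSet_Tset hpo k
  have eqT := cho_add_two_mul_setLIntegral_po_inter_add_sdiff μ hR hT hS hTsel
  have eqS := cho_add_two_mul_setLIntegral_po_inter_add_sdiff μ hR hS hT hSsel
  rw [Set.inter_comm S T] at eqS
  have hc : μ (T ∩ S) ≠ ∞ := ne_top_of_le_ne_top hTfin (measure_mono Set.inter_subset_left)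
  have ha : μ (T \ S) ≠ ∞ := ne_top_of_le_ne_top hTfin (measure_mono Set.sdiff_subset)
  have hba : μ (S \ T) ≤ μ (T \ S) := by
    rw [← measure_inter_add_sdiff T hS, ← measure_inter_add_sdiff S hT, Set.inter_comm S T]
      at hST
    exact (ENNReal.add_le_add_iff_left hc).1 hST
  have hIk : ∫⁻ x in T \ S, po μ R x ∂μ ≤ k * μ (T \ S) :=
    (setLIntegral_mono measurable_const fun _ hx => hx.1).trans_eq (setLIntegral_const _ _)
  have hI := two_mul_setLIntegral_po_le μ hR (hT.diff hS) hT hTsel Set.sdiff_subset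
  rw [Set.sdiff_sdiff_right_self] at hI
  have hfin :
      2 * (∫⁻ x in T ∩ S, po μ R x ∂μ + ∫⁻ x in T \ S, po μ R x ∂μ) ≠ ∞ := by
    rw [lintegral_inter_add_sdiff _ _ hS]
    exact ENNReal.mul_ne_top ENNReal.ofNat_ne_top (setLIntegral_po_ne_top hTsel hTfin)
  refine ENNReal.le_of_add_le_add_right hfin ?_
  calc cho μ R S + 2 * ∫⁻ x in S \ T, po μ R x ∂μ +
        2 * (∫⁻ x in T ∩ S, po μ R x ∂μ + ∫⁻ x in T \ S, po μ R x ∂μ)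
      = (μ (T ∩ S) + μ (S \ T)) ^ 2 + 2 * ∫⁻ x in T \ S, po μ R x ∂μ := by
        rw [← eqS]; ring
    _ ≤ (μ (T ∩ S) + μ (T \ S)) ^ 2 + 2 * (k * μ (S \ T)) :=
        sq_add_two_mul_le ha hc hba hIk hI
    _ = cho μ R T + 2 * (k * μ (S \ T)) +
        2 * (∫⁻ x in T ∩ S, po μ R x ∂μ + ∫⁻ x in T \ S, po μ R x ∂μ) := by
        rw [← eqT]; ring

theorem cho_lt_cho_Tset {μ : Measure X} [SFinite μ]
    (hR : MeasurableSet {p : X × X | R p.1 p.2}) (hpo : Measurable (po μ R)) {k : ℝ≥0∞}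
    (hTsel : IsSelection R (Tset μ R k)) (hTfin : μ (Tset μ R k) ≠ ∞) {S : Set X}
    (hS : MeasurableSet S) (hSsel : IsSelection R S) (hST : μ S ≤ μ (Tset μ R k))
    (hSdiff : μ (S \ Tset μ R k) ≠ 0) :
    cho μ R S < cho μ R (Tset μ R k) := by
  set T := Tset μ R k
  have hSfin : μ S ≠ ∞ := ne_top_of_le_ne_top hTfin hST
  have hpo_gt : ∀ x ∈ S \ T, k < po μ R x := fun _ hx => not_le.1 hx.2
  have hkI : k * μ (S \ T) ≤ ∫⁻ x in S \ T, po μ R x ∂μ :=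
    (setLIntegral_const _ _).symm.trans_le (setLIntegral_mono hpo fun x hx => (hpo_gt x hx).le)
  have hkI_fin : k * μ (S \ T) ≠ ∞ :=
    ne_top_of_le_ne_top (setLIntegral_po_ne_top hSsel hSfin)
      (hkI.trans (lintegral_mono_set Set.sdiff_subset))
  have hkI_lt : k * μ (S \ T) < ∫⁻ x in S \ T, po μ R x ∂μ := by
    rw [← setLIntegral_const]
    refine setLIntegral_strict_mono (hS.diff (measurableSet_Tset hpo k)) hSdiff hpo ?_
      (ae_of_all _ hpo_gt)
    rwa [setLIntegral_const]
  have hchoS : cho μ R S ≠ ∞ :=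
    ne_top_of_le_ne_top (ENNReal.pow_ne_top hSfin)
      (le_self_add.trans_eq (cho_add_two_mul_setLIntegral_po μ hR hS hSsel))
  refine lt_of_add_lt_add_right (a := 2 * (k * μ (S \ T))) ?_
  calc cho μ R S + 2 * (k * μ (S \ T)) < cho μ R S + 2 * ∫⁻ x in S \ T, po μ R x ∂μ := by
        gcongr; exact ENNReal.ofNat_ne_top
    _ ≤ cho μ R T + 2 * (k * μ (S \ T)) :=
        cho_add_two_mul_setLIntegral_po_sdiff_Tset_le hR hpo hTsel hTfin hS hSsel hST

theorem cho_le_cho_Tset {μ : Measure X} [SFinite μ]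
    (hR : MeasurableSet {p : X × X | R p.1 p.2}) (hpo : Measurable (po μ R)) {k : ℝ≥0∞}
    (hTsel : IsSelection R (Tset μ R k)) (hTfin : μ (Tset μ R k) ≠ ∞) {S : Set X}
    (hS : MeasurableSet S) (hSsel : IsSelection R S) (hST : μ S ≤ μ (Tset μ R k)) :
    cho μ R S ≤ cho μ R (Tset μ R k) := by
  rcases eq_or_ne (μ (S \ Tset μ R k)) 0 with hSdiff | hSdiff
  · calc cho μ R S
        ≤ cho μ R S + 2 * ∫⁻ x in S \ Tset μ R k, po μ R x ∂μ := le_self_add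
      _ ≤ cho μ R (Tset μ R k) + 2 * (k * μ (S \ Tset μ R k)) :=
        cho_add_two_mul_setLIntegral_po_sdiff_Tset_le hR hpo hTsel hTfin hS hSsel hST
      _ = cho μ R (Tset μ R k) := by rw [hSdiff, mul_zero, mul_zero, add_zero]
  · exact (cho_lt_cho_Tset hR hpo hTsel hTfin hS hSsel hST hSdiff).le

end MaximumChoice

/-- The maximum choice theorem: if `T_k` is a selection of finite measure, then
every (measurable) selection `S` with `μ(S) ≤ μ(T_k)` satisfies
`cho(S) ≤ cho(T_k)`; moreover, any selection `A` with `μ(A) ≤ μ(T_k)` and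
`cho(A) = cho(T_k)` satisfies `μ(A \ T_k) = 0`. -/
theorem maximum_choice_theorem
    {X : Type*} [MeasurableSpace X] (μ : Measure X) [SigmaFinite μ]
    (R : X → X → Prop) (hR : MeasurableSet {p : X × X | R p.1 p.2})
    (hpo : Measurable (po μ R)) (k : ℝ≥0∞)
    (hTsel : IsSelection R (Tset μ R k)) (hTfin : μ (Tset μ R k) < ⊤) :
    (∀ S : Set X, MeasurableSet S → IsSelection R S → μ S ≤ μ (Tset μ R k) →
        cho μ R S ≤ cho μ R (Tset μ R k)) ∧
      (∀ A : Set X, MeasurableSet A → IsSelection R A → μ A ≤ μ (Tset μ R k) →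
        cho μ R A = cho μ R (Tset μ R k) → μ (A \ Tset μ R k) = 0) := by
  refine ⟨fun S hS hSsel hST => cho_le_cho_Tset hR hpo hTsel hTfin.ne hS hSsel hST,
    fun A hA hAsel hAT hcho => ?_⟩
  by_contra hAdiff
  exact (cho_lt_cho_Tset hR hpo hTsel hTfin.ne hA hAsel hAT hAdiff).ne hcho
end

section
/- Let X₁ and X₂ be independent continuous (atomless) real random variables on a probability space (Ω, Σ, P), with the relation ω R ω' iff X₁(ω) ≤ X₁(ω') and X₂(ω) ≤ X₂(ω'). Then div(Ω) = 1/2, i.e., the probability that two independently drawn points are incomparable (offer choice) under R is 1/2. -/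
/-!
Ties have probability zero, and once they are excluded the two sides of the equivalence
cannot both hold, so the event is that the two points are discordant: `X₁` and `X₂` order
them in opposite ways. Under `P ⊗ P` the pairs `(X₁ ω, X₁ ω')` and `(X₂ ω, X₂ ω')` are
independent, and by the symmetry `ω ↔ ω'` each strict comparison has probability `1/2`; so
each of the two discordant configurations has probability `1/4`.
-/

open MeasureTheory ProbabilityTheory Set
open scoped ENNReal

namespace ProbabilityTheory

variable {Ω Ω' β β' γ γ' : Type*} [MeasurableSpace Ω] [MeasurableSpace Ω']
  [MeasurableSpace β] [MeasurableSpace β'] [MeasurableSpace γ] [MeasurableSpace γ']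

theorem IndepFun.prodMap_prod {μ : Measure Ω} {ν : Measure Ω'} [SFinite ν]
    {X : Ω → β} {Y : Ω → γ} {X' : Ω' → β'} {Y' : Ω' → γ'}
    (hX : Measurable X) (hY : Measurable Y) (hX' : Measurable X') (hY' : Measurable Y')
    (h : X ⟂ᵢ[μ] Y) (h' : X' ⟂ᵢ[ν] Y') :
    Prod.map X X' ⟂ᵢ[μ.prod ν] Prod.map Y Y' := by
  rw [indepFun_iff_measure_inter_preimage_eq_mul]
  intro S T hS hT
  set F : β → ℝ≥0∞ := fun a => ν (X' ⁻¹' (Prod.mk a ⁻¹' S))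
  set G : γ → ℝ≥0∞ := fun b => ν (Y' ⁻¹' (Prod.mk b ⁻¹' T))
  have hF : Measurable F := by
    simpa [F, Measure.map_apply hX' (measurable_prodMk_left hS)] using
      measurable_measure_prodMk_left (ν := ν.map X') hS
  have hG : Measurable G := by
    simpa [G, Measure.map_apply hY' (measurable_prodMk_left hT)] using
      measurable_measure_prodMk_left (ν := ν.map Y') hT
  have hXS := (hX.prodMap hX') hS
  have hYT := (hY.prodMap hY') hT
  rw [Measure.prod_apply (hXS.inter hYT), Measure.prod_apply hXS, Measure.prod_apply hYT]
  -- the section at `ω` is `X' ⁻¹' (S at X ω) ∩ Y' ⁻¹' (T at Y ω)`: split it by `h'`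
  calc ∫⁻ ω, ν (Prod.mk ω ⁻¹' (Prod.map X X' ⁻¹' S ∩ Prod.map Y Y' ⁻¹' T)) ∂μ
      = ∫⁻ ω, F (X ω) * G (Y ω) ∂μ := lintegral_congr fun ω =>
        h'.measure_inter_preimage_eq_mul _ _ (measurable_prodMk_left hS)
          (measurable_prodMk_left hT)
    _ = (∫⁻ ω, F (X ω) ∂μ) * ∫⁻ ω, G (Y ω) ∂μ :=
        lintegral_mul_eq_lintegral_mul_lintegral_of_indepFun''
          (hF.comp hX).aemeasurable (hG.comp hY).aemeasurable (h.comp hF hG)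

end ProbabilityTheory

section RealValued

variable {Ω Ω' : Type*} [MeasurableSpace Ω] [MeasurableSpace Ω']

theorem measure_prod_setOf_eq_eq_zero {μ : Measure Ω} {ν : Measure Ω'} [SFinite ν]
    {X : Ω → ℝ} {Y : Ω' → ℝ} (hX : Measurable X) (hY : Measurable Y)
    (hc : ∀ x, ν {ω | Y ω = x} = 0) :
    (μ.prod ν) {p | X p.1 = Y p.2} = 0 := by
  rw [Measure.measure_prod_null (measurableSet_eq_fun (by fun_prop) (by fun_prop))]
  exact Filter.Eventually.of_forall fun ω => by
    simpa [preimage, eq_comm] using hc (X ω)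

theorem measure_prod_setOf_lt_eq_half {μ : Measure Ω} [IsProbabilityMeasure μ]
    {X : Ω → ℝ} (hX : Measurable X) (hc : ∀ x, μ {ω | X ω = x} = 0) :
    (μ.prod μ) {p | X p.1 < X p.2} = 1 / 2 := by
  set L : Set (Ω × Ω) := {p | X p.1 < X p.2}
  have hL : MeasurableSet L := measurableSet_lt (by fun_prop) (by fun_prop)
  have hcover : (L ∪ Prod.swap ⁻¹' L : Set (Ω × Ω)) =ᵐ[μ.prod μ] univ := by
    refine ae_eq_univ.2 (measure_mono_null (fun p hp => ?_)
      (measure_prod_setOf_eq_eq_zero hX hX hc))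
    simp only [L, mem_compl_iff, mem_union, mem_ofPred_eq, mem_preimage, Prod.fst_swap,
      Prod.snd_swap, not_or, not_lt] at hp
    exact le_antisymm hp.2 hp.1
  have hdisj : Disjoint L (Prod.swap ⁻¹' L) :=
    disjoint_left.2 fun _ h h' => lt_asymm (α := ℝ) h h'
  have htwo : (μ.prod μ) L + (μ.prod μ) L = 1 := calc
    _ = (μ.prod μ) L + (μ.prod μ) (Prod.swap ⁻¹' L) := by
      rw [Measure.measurePreserving_swap.measure_preimage hL.nullMeasurableSet]
    _ = (μ.prod μ) (L ∪ Prod.swap ⁻¹' L) := (measure_union hdisj (measurable_swap hL)).symm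
    _ = 1 := by rw [measure_congr hcover, measure_univ]
  rw [ENNReal.eq_div_iff two_ne_zero ENNReal.ofNat_ne_top, two_mul, htwo]

end RealValued

theorem le_and_le_iff_ge_and_ge_iff_of_ne {α : Type*} [LinearOrder α] {a b c d : α}
    (hab : a ≠ b) (hcd : c ≠ d) :
    ((a ≤ b ∧ c ≤ d) ↔ (b ≤ a ∧ d ≤ c)) ↔
      (a < b ∧ d < c) ∨ (b < a ∧ c < d) := by
  rcases hab.lt_or_gt with h | h <;> rcases hcd.lt_or_gt with h' | h' <;>
    simp [h, h', h.le, h'.le, h.not_ge, h'.not_ge]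

theorem measure_prod_setOf_lt_and_gt_eq_half_mul_half {Ω : Type*} [MeasurableSpace Ω]
    {P : Measure Ω} [IsProbabilityMeasure P] {X₁ X₂ : Ω → ℝ}
    (h₁ : Measurable X₁) (h₂ : Measurable X₂) (hind : X₁ ⟂ᵢ[P] X₂)
    (hc₁ : ∀ x, P {ω | X₁ ω = x} = 0) (hc₂ : ∀ x, P {ω | X₂ ω = x} = 0) :
    (P.prod P) {p | X₁ p.1 < X₁ p.2 ∧ X₂ p.2 < X₂ p.1} = 1 / 2 * (1 / 2) := by
  have hsplit := (hind.prodMap_prod h₁ h₂ h₁ h₂ hind).measure_inter_preimage_eq_mul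
    {a : ℝ × ℝ | a.1 < a.2} {b : ℝ × ℝ | b.2 < b.1}
    (measurableSet_lt measurable_fst measurable_snd)
    (measurableSet_lt measurable_snd measurable_fst)
  have hswap₂ := (Measure.measurePreserving_swap (μ := P) (ν := P)).measure_preimage
    (measurableSet_lt (h₂.comp measurable_fst) (h₂.comp measurable_snd)).nullMeasurableSet
  refine hsplit.trans (congrArg₂ _ ?_ ?_)
  · exact measure_prod_setOf_lt_eq_half h₁ hc₁
  · exact hswap₂.trans (measure_prod_setOf_lt_eq_half h₂ hc₂)

/-- For independent continuous (atomless) real random variables `X₁, X₂` on a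
probability space and the relation `ω R ω' ↔ X₁ ω ≤ X₁ ω' ∧ X₂ ω ≤ X₂ ω'`,
`div(Ω) = 1/2`: the probability that two independently drawn points are
incomparable (offer choice) under `R` is `1/2`. -/
theorem diversity_univ_eq_half
    {Ω : Type*} [MeasurableSpace Ω] (P : Measure Ω) [IsProbabilityMeasure P]
    (X₁ X₂ : Ω → ℝ) (h₁ : Measurable X₁) (h₂ : Measurable X₂)
    (hind : ProbabilityTheory.IndepFun X₁ X₂ P)
    (hc₁ : ∀ x : ℝ, P {ω | X₁ ω = x} = 0)
    (hc₂ : ∀ x : ℝ, P {ω | X₂ ω = x} = 0) :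
    (P.prod P) {p : Ω × Ω |
        ((X₁ p.1 ≤ X₁ p.2 ∧ X₂ p.1 ≤ X₂ p.2) ↔
          (X₁ p.2 ≤ X₁ p.1 ∧ X₂ p.2 ≤ X₂ p.1))}
      = 1 / 2 := by
  set U : Set (Ω × Ω) := {p | X₁ p.1 < X₁ p.2 ∧ X₂ p.2 < X₂ p.1}
  have hQU : (P.prod P) U = 1 / 2 * (1 / 2) :=
    measure_prod_setOf_lt_and_gt_eq_half_mul_half h₁ h₂ hind hc₁ hc₂
  have hU : MeasurableSet U :=
    (measurableSet_lt (h₁.comp measurable_fst) (h₁.comp measurable_snd)).inter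
      (measurableSet_lt (h₂.comp measurable_snd) (h₂.comp measurable_fst))
  have hties := measure_union_null (measure_prod_setOf_eq_eq_zero (μ := P) h₁ h₁ hc₁)
    (measure_prod_setOf_eq_eq_zero (μ := P) h₂ h₂ hc₂)
  have hdiscordant : {p : Ω × Ω | ((X₁ p.1 ≤ X₁ p.2 ∧ X₂ p.1 ≤ X₂ p.2) ↔
      (X₁ p.2 ≤ X₁ p.1 ∧ X₂ p.2 ≤ X₂ p.1))}
      =ᵐ[P.prod P] (U ∪ Prod.swap ⁻¹' U : Set (Ω × Ω)) := by
    filter_upwards [measure_eq_zero_iff_ae_notMem.1 hties] with p hp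
    simp only [mem_union, mem_ofPred_eq, not_or] at hp
    exact propext (le_and_le_iff_ge_and_ge_iff_of_ne hp.1 hp.2)
  calc (P.prod P) _ = (P.prod P) (U ∪ Prod.swap ⁻¹' U) := measure_congr hdiscordant
    _ = (P.prod P) U + (P.prod P) U := by
      rw [measure_union (disjoint_left.2 fun _ h h' => lt_asymm h.1 h'.1) (measurable_swap hU),
        Measure.measurePreserving_swap.measure_preimage hU.nullMeasurableSet]
    _ = 1 / 2 := by
      rw [hQU, ← two_mul, ← mul_assoc]
      norm_num [ENNReal.mul_inv_cancel]
end

section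
/- Let X₁, X₂ be independent continuous real random variables with the componentwise relation R. Then for two points x, y drawn independently from the distribution, P(po(x) = po(y)) = 0, where po(x) = P({y : y R* x}); hence sorting by po is almost surely tie-free (a linear extension in the probabilistic sense). -/
/-!
Up to the null set of ties, the points strictly dominated by `ω` form the quadrant
`{X₁ ≤ X₁ ω, X₂ ≤ X₂ ω}`, so by independence `po ω = F₁ (X₁ ω) * F₂ (X₂ ω)` with `Fᵢ` the
marginal CDFs. An atomless CDF is constant only on intervals of zero mass, so its level sets
are null. By Fubini over the independent pair `(X₁, X₂)`, the level sets of
`F₁ (X₁ ω) * F₂ (X₂ ω)` are null as well: off the null set `{F₁ (X₁ ω) = 0}`, a slice is a level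
set of `F₂ ∘ X₂`. Fubini over the two independent draws then gives `P (po x = po y) = 0`.
-/

open MeasureTheory Set ProbabilityTheory
open scoped ENNReal

lemma measure_eq_zero_of_forall_measure_Ioo_eq_zero {μ : Measure ℝ} [NullSingletonClass μ]
    {M : Set ℝ} (h : ∀ s ∈ M, ∀ t ∈ M, μ (Ioo s t) = 0) : μ M = 0 := by
  have hcover : M ⊆ {x | IsLeast M x} ∪ {x | IsGreatest M x} ∪
      ⋃ (p : ℚ × ℚ) (_ : μ (Ioo (p.1 : ℝ) p.2) = 0), Ioo (p.1 : ℝ) p.2 := by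
    intro x hx
    by_cases hL : IsLeast M x
    · exact Or.inl (Or.inl hL)
    by_cases hG : IsGreatest M x
    · exact Or.inl (Or.inr hG)
    obtain ⟨s, hs, hsx⟩ : ∃ s ∈ M, s < x := by
      simpa [IsLeast, hx, lowerBounds] using hL
    obtain ⟨t, ht, hxt⟩ : ∃ t ∈ M, x < t := by
      simpa [IsGreatest, hx, upperBounds] using hG
    obtain ⟨q, hsq, hqx⟩ := exists_rat_btwn hsx
    obtain ⟨r, hxr, hrt⟩ := exists_rat_btwn hxt
    refine Or.inr (mem_biUnion (x := (q, r)) ?_ ⟨hqx, hxr⟩)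
    exact measure_mono_null (Ioo_subset_Ioo hsq.le hrt.le) (h s hs t ht)
  refine measure_mono_null hcover (measure_union_null (measure_union_null ?_ ?_) ?_)
  · exact Subsingleton.measure_zero (fun _ ha _ hb => ha.unique hb) μ
  · exact Subsingleton.measure_zero (fun _ ha _ hb => ha.unique hb) μ
  · exact measure_biUnion_null_iff (to_countable _) |>.2 fun _ hp => hp

lemma measure_setOf_measure_Iic_eq_eq_zero {μ : Measure ℝ} [IsFiniteMeasure μ]
    [NullSingletonClass μ] (d : ℝ≥0∞) :
    μ {t | μ (Iic t) = d} = 0 := by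
  refine measure_eq_zero_of_forall_measure_Ioo_eq_zero fun s hs t ht => ?_
  rcases le_or_gt t s with hts | hst
  · simp [Ioo_eq_empty_of_le hts]
  refine measure_mono_null Ioo_subset_Ioc_self ?_
  have hIoc : Ioc s t = Iic t \ Iic s := by ext; simp [and_comm]
  rw [hIoc, measure_sdiff (Iic_subset_Iic.2 hst.le) measurableSet_Iic.nullMeasurableSet
    (measure_ne_top μ _), ht, hs, tsub_self]

lemma measure_prod_setOf_mul_eq_eq_zero {α β : Type*} [MeasurableSpace α] [MeasurableSpace β]
    {μ : Measure α} {ν : Measure β} [SFinite ν] {f : α → ℝ≥0∞} {g : β → ℝ≥0∞}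
    (hf : Measurable f) (hg : Measurable g) (hf₀ : μ {a | f a = 0} = 0) (hf_top : ∀ a, f a ≠ ∞)
    (hg_level : ∀ d, ν {b | g b = d} = 0) (c : ℝ≥0∞) :
    μ.prod ν {q | f q.1 * g q.2 = c} = 0 := by
  refine Measure.measure_prod_null_of_ae_null
    (measurableSet_eq_fun (by fun_prop) measurable_const) ?_
  filter_upwards [measure_eq_zero_iff_ae_notMem.1 hf₀] with a ha
  have hslice : Prod.mk a ⁻¹' {q | f q.1 * g q.2 = c} = {b | g b = c / f a} := by
    ext b
    simp [ENNReal.eq_div_iff ha (hf_top a), eq_comm]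
  exact hslice ▸ hg_level _

lemma measure_prod_setOf_eq_eq_zero_s16 {α β γ : Type*} [MeasurableSpace α] [MeasurableSpace β]
    [MeasurableSpace γ] [MeasurableEq γ] {μ : Measure α} {ν : Measure β} [SFinite ν]
    {f : α → γ} {g : β → γ} (hf : Measurable f) (hg : Measurable g)
    (hg_level : ∀ d, ν {b | g b = d} = 0) :
    μ.prod ν {p | f p.1 = g p.2} = 0 := by
  refine Measure.measure_prod_null_of_ae_null
    (measurableSet_eq_fun (by fun_prop) (by fun_prop)) ?_
  filter_upwards with a
  have hslice : Prod.mk a ⁻¹' {p | f p.1 = g p.2} = {b | g b = f a} := by ext; exact eq_comm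
  exact hslice ▸ hg_level (f a)

section RandomVariable

variable {Ω : Type*} [MeasurableSpace Ω] {P : Measure Ω}

lemma measurable_measure_setOf_le (X : Ω → ℝ) : Measurable fun t => P {ω | X ω ≤ t} :=
  Monotone.measurable fun _ _ hst => measure_mono fun _ (h : _ ≤ _) => h.trans hst

lemma measure_setOf_measure_le_eq_eq_zero [IsFiniteMeasure P] {X : Ω → ℝ} (hX : Measurable X)
    (hc : ∀ x, P {ω | X ω = x} = 0) (d : ℝ≥0∞) :
    P {ω | P {ω' | X ω' ≤ X ω} = d} = 0 := by
  have : NullSingletonClass (P.map X) :=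
    ⟨fun x => by rw [Measure.map_apply hX (measurableSet_singleton x)]; exact hc x⟩
  have hcdf (t : ℝ) : P.map X (Iic t) = P {ω | X ω ≤ t} := Measure.map_apply hX measurableSet_Iic
  have := measure_setOf_measure_Iic_eq_eq_zero (μ := P.map X) d
  simp only [hcdf] at this
  rwa [Measure.map_apply hX (measurableSet_eq_fun (measurable_measure_setOf_le X) measurable_const)]
    at this

lemma measure_setOf_le_and_not_le_eq_mul {X₁ X₂ : Ω → ℝ} (hind : X₁ ⟂ᵢ[P] X₂)
    (hc₁ : ∀ x, P {ω | X₁ ω = x} = 0) (a b : ℝ) :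
    P {ω | (X₁ ω ≤ a ∧ X₂ ω ≤ b) ∧ ¬ (a ≤ X₁ ω ∧ b ≤ X₂ ω)}
      = P {ω | X₁ ω ≤ a} * P {ω | X₂ ω ≤ b} := by
  have hties : {ω | (X₁ ω ≤ a ∧ X₂ ω ≤ b) ∧ ¬ (a ≤ X₁ ω ∧ b ≤ X₂ ω)}
      = (X₁ ⁻¹' Iic a ∩ X₂ ⁻¹' Iic b) \ {ω | X₁ ω = a ∧ X₂ ω = b} := by
    ext ω
    simp only [mem_ofPred_eq, mem_sdiff, mem_inter_iff, mem_preimage, mem_Iic]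
    constructor
    · rintro ⟨hle, hne⟩
      exact ⟨hle, fun heq => hne ⟨heq.1.ge, heq.2.ge⟩⟩
    · rintro ⟨hle, hne⟩
      exact ⟨hle, fun hge => hne ⟨hle.1.antisymm hge.1, hle.2.antisymm hge.2⟩⟩
  rw [hties, measure_sdiff_null (measure_mono_null (fun _ h => h.1) (hc₁ a)),
    hind.measure_inter_preimage_eq_mul _ _ measurableSet_Iic measurableSet_Iic]
  rfl

lemma ProbabilityTheory.IndepFun.measure_setOf_mul_comp_eq_eq_zero {α β : Type*}
    [MeasurableSpace α] [MeasurableSpace β] [IsFiniteMeasure P]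
    {X : Ω → α} {Y : Ω → β} (hind : X ⟂ᵢ[P] Y) (hX : Measurable X) (hY : Measurable Y)
    {f : α → ℝ≥0∞} {g : β → ℝ≥0∞} (hf : Measurable f) (hg : Measurable g)
    (hf₀ : P {ω | f (X ω) = 0} = 0) (hf_top : ∀ a, f a ≠ ∞)
    (hg_level : ∀ d, P {ω | g (Y ω) = d} = 0) (c : ℝ≥0∞) :
    P {ω | f (X ω) * g (Y ω) = c} = 0 := by
  have hS : MeasurableSet {q : α × β | f q.1 * g q.2 = c} :=
    measurableSet_eq_fun (by fun_prop) measurable_const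
  change P ((fun ω => (X ω, Y ω)) ⁻¹' {q : α × β | f q.1 * g q.2 = c}) = 0
  rw [← Measure.map_apply (hX.prodMk hY) hS,
    (indepFun_iff_map_prod_eq_prod_map_map hX.aemeasurable hY.aemeasurable).1 hind]
  refine measure_prod_setOf_mul_eq_eq_zero hf hg ?_ hf_top (fun d => ?_) c
  · rwa [Measure.map_apply hX (measurableSet_eq_fun hf measurable_const)]
  · rw [Measure.map_apply hY (measurableSet_eq_fun hg measurable_const)]
    exact hg_level d

end RandomVariable

/-- For independent continuous real random variables `X₁, X₂` with the
componentwise relation `ω R ω' ↔ X₁ ω ≤ X₁ ω' ∧ X₂ ω ≤ X₂ ω'` and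
`po(ω) = P({ω' : ω' R* ω})`, two independently drawn points almost surely
have distinct `po` values: `P(po(x) = po(y)) = 0`; hence sorting by `po`
is almost surely tie-free. -/
theorem po_ties_null
    {Ω : Type*} [MeasurableSpace Ω] (P : Measure Ω) [IsProbabilityMeasure P]
    (X₁ X₂ : Ω → ℝ) (h₁ : Measurable X₁) (h₂ : Measurable X₂)
    (hind : ProbabilityTheory.IndepFun X₁ X₂ P)
    (hc₁ : ∀ x : ℝ, P {ω | X₁ ω = x} = 0)
    (hc₂ : ∀ x : ℝ, P {ω | X₂ ω = x} = 0) :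
    (P.prod P) {p : Ω × Ω |
        P {ω' | (X₁ ω' ≤ X₁ p.1 ∧ X₂ ω' ≤ X₂ p.1) ∧
            ¬ (X₁ p.1 ≤ X₁ ω' ∧ X₂ p.1 ≤ X₂ ω')}
          = P {ω' | (X₁ ω' ≤ X₁ p.2 ∧ X₂ ω' ≤ X₂ p.2) ∧
            ¬ (X₁ p.2 ≤ X₁ ω' ∧ X₂ p.2 ≤ X₂ ω')}}
      = 0 := by
  simp only [measure_setOf_le_and_not_le_eq_mul hind hc₁]
  have hpo : Measurable fun ω => P {ω' | X₁ ω' ≤ X₁ ω} * P {ω' | X₂ ω' ≤ X₂ ω} :=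
    ((measurable_measure_setOf_le X₁).comp h₁).mul ((measurable_measure_setOf_le X₂).comp h₂)
  refine measure_prod_setOf_eq_eq_zero_s16 hpo hpo fun c => ?_
  exact hind.measure_setOf_mul_comp_eq_eq_zero h₁ h₂ (measurable_measure_setOf_le X₁)
    (measurable_measure_setOf_le X₂) (measure_setOf_measure_le_eq_eq_zero h₁ hc₁ 0)
    (fun _ => measure_ne_top P _) (measure_setOf_measure_le_eq_eq_zero h₂ hc₂) c
end

section
/- Let X = {x₁,…,x_n} be a finite set of points in ℝ² with distinct coordinates in each component, equipped with the counting measure and the componentwise-≤ relation R. Let #disc be the number of unordered discordant pairs (pairs offering choice) and τ = (#conc − #disc)/(n(n−1)/2) Kendall's τ. Then the choice satisfies cho(X) = 2·#disc + n, and consequently τ = (n² + n − 2·cho(X))/(n² − n). -/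
/-!
`R` is the product order on `ℝ × ℝ`, a reflexive and antisymmetric relation. Hence
`(x R y) = (y R x)` holds exactly on the diagonal and on the discordant pairs, which gives
`cho(X) = #discordant ordered pairs + n`. Every ordered pair of distinct points is either
concordant or discordant, so `#conc + #disc = n² − n`, and the formula for Kendall's `τ` is
algebra on these two identities.
-/

open scoped Classical

/-- The componentwise-≤ relation on `ℝ²`. -/
def Rsq (p q : ℝ × ℝ) : Prop := p.1 ≤ q.1 ∧ p.2 ≤ q.2

/-- Choice of a finite set `s` (counting measure): the number of ordered pairs
`(x,y) ∈ s²` with `(x R y) = (y R x)`. -/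
noncomputable def choCard (s : Finset (ℝ × ℝ)) : ℕ :=
  ((s ×ˢ s).filter (fun p => Rsq p.1 p.2 ↔ Rsq p.2 p.1)).card

/-- Number of ordered discordant pairs (pairs offering choice). -/
noncomputable def discOrd (s : Finset (ℝ × ℝ)) : ℕ :=
  ((s ×ˢ s).filter (fun p => ¬ Rsq p.1 p.2 ∧ ¬ Rsq p.2 p.1)).card

/-- Number of ordered concordant pairs of distinct points. -/
noncomputable def concOrd (s : Finset (ℝ × ℝ)) : ℕ :=
  ((s ×ˢ s).filter (fun p => p.1 ≠ p.2 ∧ (Rsq p.1 p.2 ∨ Rsq p.2 p.1))).card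

open Finset

section PartialOrder

variable {α : Type*} [PartialOrder α] (s : Finset α)

theorem card_filter_le_iff_ge :
    #{p ∈ s ×ˢ s | p.1 ≤ p.2 ↔ p.2 ≤ p.1} = #{p ∈ s ×ˢ s | ¬ p.1 ≤ p.2 ∧ ¬ p.2 ≤ p.1} + #s := by
  have hsplit : {p ∈ s ×ˢ s | p.1 ≤ p.2 ↔ p.2 ≤ p.1}
      = {p ∈ s ×ˢ s | ¬ p.1 ≤ p.2 ∧ ¬ p.2 ≤ p.1} ∪ s.diag := by
    rw [diag_eq_filter, ← filter_or]
    refine filter_congr fun p _ ↦ ⟨fun h ↦ ?_, ?_⟩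
    · by_cases hle : p.1 ≤ p.2
      · exact Or.inr (le_antisymm hle (h.mp hle))
      · exact Or.inl ⟨hle, mt h.mpr hle⟩
    · rintro (⟨h₁, h₂⟩ | h)
      · exact iff_of_false h₁ h₂
      · rw [h]
  rw [hsplit, card_union_of_disjoint, diag_card]
  rw [diag_eq_filter, disjoint_filter]
  rintro p - ⟨hle, -⟩ h
  exact hle h.le

theorem card_filter_comparable_add_card_filter_incomparable [DecidableEq α] :
    #{p ∈ s ×ˢ s | p.1 ≠ p.2 ∧ (p.1 ≤ p.2 ∨ p.2 ≤ p.1)}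
      + #{p ∈ s ×ˢ s | ¬ p.1 ≤ p.2 ∧ ¬ p.2 ≤ p.1} + #s = #s * #s := by
  have hincomp : {p ∈ s ×ˢ s | ¬ p.1 ≤ p.2 ∧ ¬ p.2 ≤ p.1}
      = {p ∈ s ×ˢ s | p.1 ≠ p.2 ∧ ¬ (p.1 ≤ p.2 ∨ p.2 ≤ p.1)} := by
    refine filter_congr fun p _ ↦ ?_
    refine ⟨fun ⟨h₁, h₂⟩ ↦ ⟨fun h ↦ h₁ h.le, not_or.mpr ⟨h₁, h₂⟩⟩, fun ⟨_, h⟩ ↦ not_or.mp h⟩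
  have hdiag := card_filter_add_card_filter_not (s := s ×ˢ s) fun p ↦ p.1 = p.2
  rw [← diag_eq_filter, diag_card, card_product] at hdiag
  rw [hincomp, ← filter_filter, ← filter_filter, card_filter_add_card_filter_not]
  simp only [ne_eq] at hdiag ⊢
  omega

end PartialOrder

theorem kendall_tau_eq_of_card_identities {conc disc cho n : ℝ} (hpairs : conc + disc + n = n * n)
    (hcho : cho = disc + n) :
    (conc / 2 - disc / 2) / (n * (n - 1) / 2) = (n ^ 2 + n - 2 * cho) / (n ^ 2 - n) := by
  rw [div_sub_div_same, div_div_div_cancel_right₀ two_ne_zero, hcho]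
  congr 1 <;> linarith

theorem rsq_iff_le {p q : ℝ × ℝ} : Rsq p q ↔ p ≤ q := Iff.rfl

theorem choCard_eq_discOrd_add_card (s : Finset (ℝ × ℝ)) : choCard s = discOrd s + #s :=
  card_filter_le_iff_ge s

theorem concOrd_add_discOrd_add_card (s : Finset (ℝ × ℝ)) :
    concOrd s + discOrd s + #s = #s * #s := by
  simp only [concOrd, discOrd, rsq_iff_le]
  convert card_filter_comparable_add_card_filter_incomparable s

theorem cho_and_kendall_tau_general (s : Finset (ℝ × ℝ)) :
    choCard s = discOrd s + s.card ∧
      ((concOrd s : ℝ) / 2 - (discOrd s : ℝ) / 2)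
          / ((s.card : ℝ) * ((s.card : ℝ) - 1) / 2)
        = ((s.card : ℝ) ^ 2 + (s.card : ℝ) - 2 * (choCard s : ℝ))
          / ((s.card : ℝ) ^ 2 - (s.card : ℝ)) := by
  refine ⟨choCard_eq_discOrd_add_card s, kendall_tau_eq_of_card_identities ?_ ?_⟩
  · exact_mod_cast concOrd_add_discOrd_add_card s
  · exact_mod_cast choCard_eq_discOrd_add_card s

/-- For a finite set of `n` points in `ℝ²` with no ties in either coordinate,
the choice satisfies `cho(X) = 2·#disc + n` (in ordered-pair counts,
`cho(X) = discOrd + n` where `discOrd = 2·#disc`), and Kendall's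
`τ = (#conc − #disc)/(n(n−1)/2)` satisfies
`τ = (n² + n − 2·cho(X))/(n² − n)`. -/
theorem cho_and_kendall_tau (s : Finset (ℝ × ℝ))
    (hdist : ∀ x ∈ s, ∀ y ∈ s, x ≠ y → x.1 ≠ y.1 ∧ x.2 ≠ y.2) :
    choCard s = discOrd s + s.card ∧
      ((concOrd s : ℝ) / 2 - (discOrd s : ℝ) / 2)
          / ((s.card : ℝ) * ((s.card : ℝ) - 1) / 2)
        = ((s.card : ℝ) ^ 2 + (s.card : ℝ) - 2 * (choCard s : ℝ))
          / ((s.card : ℝ) ^ 2 - (s.card : ℝ)) :=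
  cho_and_kendall_tau_general s
end
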